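/- Let A be an n×n real matrix whose off-diagonal entries are all nonnegative. If x is a vector with all entries strictly positive and Ax = λx for some real scalar λ, then λ = max { Re(μ) : μ is an eigenvalue of A }. -/

import Mathlib

/-! Conjugating by `diagonal x` turns `A` into a matrix with nonnegative off-diagonal entries and
all row sums equal to `lam`. Its Gershgorin discs are centred at the real points `A k k` with radii
`lam - A k k`, so they all lie in the half-plane `re z ≤ lam`; and `lam` is itself an eigenvalue. -/

open Matrix Finset Module.End

namespace Matrix

variable {ι : Type*} [Fintype ι] [DecidableEq ι]

theorem mem_spectrum_iff_exists_mulVec_eq_smul {K : Type*} [Field K] {M : Matrix ι ι K} {μ : K} :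
    μ ∈ spectrum K M ↔ ∃ v ≠ 0, M *ᵥ v = μ • v := by
  rw [← spectrum_toLin', ← hasEigenvalue_iff_mem_spectrum]
  constructor
  · intro h
    obtain ⟨v, hv⟩ := h.exists_hasEigenvector
    exact ⟨v, hv.2, by simpa using hv.apply_eq_smul⟩
  · rintro ⟨v, hv0, hv⟩
    exact hasEigenvalue_of_hasEigenvector (x := v)
      (hasEigenvector_iff.2 ⟨mem_eigenspace_iff.2 (by simpa using hv), hv0⟩)

theorem map_mem_spectrum_map_of_mulVec_eq_smul {K L : Type*} [Field K] [Field L] (f : K →+* L)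
    {M : Matrix ι ι K} {v : ι → K} {μ : K} (hv0 : v ≠ 0) (hv : M *ᵥ v = μ • v) :
    f μ ∈ spectrum L (M.map f) := by
  refine mem_spectrum_iff_exists_mulVec_eq_smul.2 ⟨f ∘ v, ?_, ?_⟩
  · exact fun h => hv0 (funext fun i => f.injective (by simpa using congrFun h i))
  · ext i
    simp [← RingHom.map_mulVec, hv]

theorem sub_diag_mul_eq_sum_erase {R : Type*} [CommRing R] {M : Matrix ι ι R} {v : ι → R}
    {μ : R} (hv : M *ᵥ v = μ • v) (k : ι) :
    (μ - M k k) * v k = ∑ j ∈ univ.erase k, M k j * v j := by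
  have hk : ∑ j, M k j * v j = μ * v k := by simpa [mulVec, dotProduct] using congrFun hv k
  rw [sum_erase_eq_sub (mem_univ k), hk]
  ring

/-- Gershgorin's circle theorem for `diagonal w⁻¹ * M * diagonal w`. -/
theorem exists_norm_sub_diag_mul_le_sum_erase {K : Type*} [NormedField K] {M : Matrix ι ι K}
    {v : ι → K} {μ : K} (hv0 : v ≠ 0) (hv : M *ᵥ v = μ • v) {w : ι → ℝ} (hw : ∀ i, 0 < w i) :
    ∃ k, ‖μ - M k k‖ * w k ≤ ∑ j ∈ univ.erase k, ‖M k j‖ * w j := by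
  obtain ⟨j₀, hj₀⟩ := Function.ne_iff.mp hv0
  obtain ⟨k, -, hk⟩ := exists_max_image univ (fun j => ‖v j‖ / w j) ⟨j₀, mem_univ j₀⟩
  set c := ‖v k‖ / w k
  have hvle : ∀ j, ‖v j‖ ≤ c * w j := fun j =>
    (div_le_iff₀ (hw j)).1 (hk j (mem_univ j))
  have hc : 0 < c :=
    (div_pos (norm_pos_iff.2 hj₀) (hw j₀)).trans_le (hk j₀ (mem_univ j₀))
  refine ⟨k, le_of_mul_le_mul_right ?_ hc⟩
  calc ‖μ - M k k‖ * w k * c = ‖(μ - M k k) * v k‖ := by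
        rw [norm_mul, mul_assoc, mul_div_cancel₀ _ (hw k).ne']
    _ = ‖∑ j ∈ univ.erase k, M k j * v j‖ := by rw [sub_diag_mul_eq_sum_erase hv]
    _ ≤ ∑ j ∈ univ.erase k, ‖M k j‖ * (c * w j) :=
        (norm_sum_le _ _).trans <| sum_le_sum fun j _ => by
          rw [norm_mul]; exact mul_le_mul_of_nonneg_left (hvle j) (norm_nonneg _)
    _ = (∑ j ∈ univ.erase k, ‖M k j‖ * w j) * c := by
        rw [sum_mul]; exact sum_congr rfl fun j _ => by ring

end Matrix

/-- A positive eigenvector of a Metzler matrix (nonnegative off-diagonal entries) has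
eigenvalue equal to the maximum of the real parts of the eigenvalues. -/
theorem positive_eigenvector_max_real_part {n : ℕ} (hn : 0 < n)
    (A : Matrix (Fin n) (Fin n) ℝ) (hA : ∀ i j, i ≠ j → 0 ≤ A i j)
    (x : Fin n → ℝ) (hx : ∀ i, 0 < x i) (lam : ℝ) (hEig : A.mulVec x = lam • x) :
    IsGreatest {r : ℝ | ∃ μ ∈ spectrum ℂ (A.map (Complex.ofReal ·)), r = μ.re} lam := by
  have hx0 : x ≠ 0 := fun h => (hx ⟨0, hn⟩).ne' (congrFun h _)
  refine ⟨⟨lam, map_mem_spectrum_map_of_mulVec_eq_smul Complex.ofRealHom hx0 hEig, rfl⟩, ?_⟩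
  rintro _ ⟨μ, hμ, rfl⟩
  obtain ⟨v, hv0, hv⟩ := mem_spectrum_iff_exists_mulVec_eq_smul.1 hμ
  obtain ⟨k, hk⟩ := exists_norm_sub_diag_mul_le_sum_erase hv0 hv hx
  have hradius : ∑ j ∈ univ.erase k, ‖(A k j : ℂ)‖ * x j = (lam - A k k) * x k := by
    rw [sub_diag_mul_eq_sum_erase hEig]
    refine sum_congr rfl fun j hj => ?_
    rw [Complex.norm_real, Real.norm_of_nonneg (hA k j (ne_of_mem_erase hj).symm)]
  simp only [map_apply] at hk
  rw [hradius] at hk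
  calc μ.re = A k k + (μ - A k k).re := by simp
    _ ≤ A k k + ‖μ - A k k‖ := by gcongr; exact Complex.re_le_norm _
    _ ≤ lam := by linarith [le_of_mul_le_mul_right hk (hx k)]
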